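/- arXiv:2205.14982 — 3 statements merged into one kernel-verified Lean document; each statement's English description precedes it below -/
import Mathlib

section
/- If (m₂, M₂) with m₂ > 0 is an equilibrium of the reduced system, then m₂ = (-M₂cef + M₂bd - cf)/(c(M₂e + d + 1)) and M₂ satisfies AM₂² + BM₂ + C = 0 where A = bce σ + be ε σ + bce + be ε, B = acef + bcdσ + bdεσ - abd + bcd + bcσ + bdε + bεσ + bc + bε, and C = acf. -/
/-!
Both feedback factors are `x / P · (1 + d m / P)⁻¹ = x / Q` with `P = (f + m)(M e + 1)` and
`Q = P + d m`. At an interior equilibrium the `M`-equation reads `c Q = b d M`, which is linear in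
`m` and gives the formula for `m₂`; the `m`-equation reads `a d m = (ε + c)(1 + σ) Q`, and
eliminating `Q` between the two gives `a c m = (ε + c)(1 + σ) b M`. Substituting the formula for
`m₂` into this last relation yields the quadratic in `M₂`.
-/

theorem div_mul_inv_one_add_div {K : Type*} [Field K] {p : K} (hp : p ≠ 0) (x y : K) :
    x / p * (1 + y / p)⁻¹ = x / (p + y) := by
  rw [one_add_div hp, inv_div, div_mul_div_cancel₀ hp]

section InteriorEquilibrium

variable {a b c d e f ε σ m M : ℝ}

theorem interior_equilibrium_eq_div
    (hc : 0 < c) (hd : 0 < d) (he : 0 < e) (hM : 0 ≤ M)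
    (hbalance : c * ((f + m) * (M * e + 1) + d * m) = b * M * d) :
    m = (-(M * c * e * f) + M * b * d - c * f) / (c * (M * e + d + 1)) := by
  rw [eq_div_iff (by positivity)]
  linear_combination hbalance

theorem interior_equilibrium_quadratic (hd : d ≠ 0)
    (hbalance : c * ((f + m) * (M * e + 1) + d * m) = b * M * d)
    (hgrowth : a * d * m = (ε + c) * (1 + σ) * ((f + m) * (M * e + 1) + d * m)) :
    (b * c * e * σ + b * e * ε * σ + b * c * e + b * e * ε) * M ^ 2 +
      (a * c * e * f + b * c * d * σ + b * d * ε * σ - a * b * d + b * c * d +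
        b * c * σ + b * d * ε + b * ε * σ + b * c + b * ε) * M +
      a * c * f = 0 := by
  have hlinear : a * c * m = (ε + c) * (1 + σ) * b * M :=
    mul_left_cancel₀ hd (by linear_combination c * hgrowth + (ε + c) * (1 + σ) * hbalance)
  linear_combination a * hbalance - (M * e + d + 1) * hlinear

end InteriorEquilibrium

theorem interior_equilibrium_characterization_general (a b c d e f ε σ m₂ M₂ : ℝ)
    (hc : 0 < c) (hd : 0 < d) (he : 0 < e) (hf : 0 < f)
    (hσ : 0 < σ)
    (hm₂ : 0 < m₂) (hM₂ : 0 ≤ M₂)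
    (heq1 : (a * d * m₂ / ((f + m₂) * (M₂ * e + 1) * (1 + σ)) *
      (1 + d * m₂ / ((f + m₂) * (M₂ * e + 1)))⁻¹ - ε - c) * m₂ = 0)
    (heq2 : c * m₂ - b * M₂ * d * m₂ / ((f + m₂) * (M₂ * e + 1)) *
      (1 + d * m₂ / ((f + m₂) * (M₂ * e + 1)))⁻¹ = 0) :
    m₂ = (-(M₂ * c * e * f) + M₂ * b * d - c * f) / (c * (M₂ * e + d + 1)) ∧
    (b * c * e * σ + b * e * ε * σ + b * c * e + b * e * ε) * M₂ ^ 2 +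
      (a * c * e * f + b * c * d * σ + b * d * ε * σ - a * b * d + b * c * d +
        b * c * σ + b * d * ε + b * ε * σ + b * c + b * ε) * M₂ +
      a * c * f = 0 := by
  have hP : (f + m₂) * (M₂ * e + 1) ≠ 0 := by positivity
  have hQ : (f + m₂) * (M₂ * e + 1) + d * m₂ ≠ 0 := by positivity
  have hσ' : 1 + σ ≠ 0 := by positivity
  rw [div_mul_eq_div_div_swap, div_mul_inv_one_add_div hP] at heq1
  rw [div_mul_inv_one_add_div hP] at heq2
  have hgrowth : a * d * m₂ = (ε + c) * (1 + σ) * ((f + m₂) * (M₂ * e + 1) + d * m₂) := by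
    have h := (mul_eq_zero.mp heq1).resolve_right hm₂.ne'
    field_simp at h
    linear_combination h
  have hbalance : c * ((f + m₂) * (M₂ * e + 1) + d * m₂) = b * M₂ * d := by
    rw [sub_eq_zero, eq_div_iff hQ] at heq2
    exact mul_left_cancel₀ hm₂.ne' (by linear_combination heq2)
  exact ⟨interior_equilibrium_eq_div hc hd he hM₂ hbalance,
    interior_equilibrium_quadratic hd.ne' hbalance hgrowth⟩

/-- If (m₂, M₂) with m₂ > 0 is an equilibrium of the reduced system, then
m₂ = (-M₂cef + M₂bd - cf)/(c(M₂e + d + 1)) and M₂ satisfies A M₂² + B M₂ + C = 0. -/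
theorem interior_equilibrium_characterization (a b c d e f ε σ m₂ M₂ : ℝ)
    (ha : 0 < a) (hb : 0 < b) (hc : 0 < c) (hd : 0 < d) (he : 0 < e) (hf : 0 < f)
    (hε : 0 < ε) (hσ : 0 < σ)
    (hm₂ : 0 < m₂) (hM₂ : 0 ≤ M₂)
    (heq1 : (a * d * m₂ / ((f + m₂) * (M₂ * e + 1) * (1 + σ)) *
      (1 + d * m₂ / ((f + m₂) * (M₂ * e + 1)))⁻¹ - ε - c) * m₂ = 0)
    (heq2 : c * m₂ - b * M₂ * d * m₂ / ((f + m₂) * (M₂ * e + 1)) *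
      (1 + d * m₂ / ((f + m₂) * (M₂ * e + 1)))⁻¹ = 0) :
    m₂ = (-(M₂ * c * e * f) + M₂ * b * d - c * f) / (c * (M₂ * e + d + 1)) ∧
    (b * c * e * σ + b * e * ε * σ + b * c * e + b * e * ε) * M₂ ^ 2 +
      (a * c * e * f + b * c * d * σ + b * d * ε * σ - a * b * d + b * c * d +
        b * c * σ + b * d * ε + b * ε * σ + b * c + b * ε) * M₂ +
      a * c * f = 0 :=
  interior_equilibrium_characterization_general a b c d e f ε σ m₂ M₂ hc hd he hf hσ hm₂ hM₂ heq1
    heq2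
end

section
/- Under the conditions dam₂(2M₂ef + M₂em₂ + dm₂ + 2f + m₂)/((M₂ef + M₂em₂ + dm₂ + f + m₂)²(1+σ)) < ε + c and c > M₂bdf(M₂e+1)/((e(f+m₂)M₂ + f + (d+1)m₂)²), both eigenvalues of the Jacobian J₂ at the interior equilibrium (m₂, M₂) have negative real part (so the equilibrium is locally asymptotically stable). -/
lemma quad_neg_re (T D : ℝ) (hT : T < 0) (hD : 0 < D) :
    ∀ z : ℂ, z ^ 2 - (T : ℂ) * z + (D : ℂ) = 0 → z.re < 0 := by
  intro z hz
  have him : (z ^ 2 - (T : ℂ) * z + (D : ℂ)).im = 0 := by rw [hz]; simp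
  have hre : (z ^ 2 - (T : ℂ) * z + (D : ℂ)).re = 0 := by rw [hz]; simp
  simp [sq, Complex.mul_im, Complex.mul_re] at him hre
  set x := z.re
  set y := z.im
  by_cases hy : y = 0
  · rw [hy] at hre
    nlinarith [sq_nonneg x]
  · have h2 : y * (2 * x - T) = 0 := by ring_nf; ring_nf at him; linarith
    have := (mul_eq_zero.mp h2).resolve_left hy
    linarith


/-- Under the two stability conditions, both eigenvalues of the Jacobian J₂
at the interior equilibrium (m₂, M₂) have negative real part. -/
theorem interior_equilibrium_stable (a b c d e f ε σ m₂ M₂ : ℝ)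
    (ha : 0 < a) (hb : 0 < b) (hc : 0 < c) (hd : 0 < d) (he : 0 < e) (hf : 0 < f)
    (hε : 0 < ε) (hσ : 0 < σ) (hm₂ : 0 < m₂) (hM₂ : 0 < M₂)
    (Ψ₁₁ Ψ₁₂ Ψ₂₁ Ψ₂₂ : ℝ)
    (h11 : Ψ₁₁ = d * a * m₂ * (2 * M₂ * e * f + M₂ * e * m₂ + d * m₂ + 2 * f + m₂) /
      ((M₂ * e * f + M₂ * e * m₂ + d * m₂ + f + m₂) ^ 2 * (1 + σ)) - ε - c)
    (h12 : Ψ₁₂ = -(d * a * m₂ ^ 2 * e * (f + m₂)) /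
      ((1 + σ) * ((M₂ * e + d + 1) * m₂ + f * (M₂ * e + 1)) ^ 2))
    (h21 : Ψ₂₁ = c - M₂ * b * d * f * (M₂ * e + 1) /
      ((e * (f + m₂) * M₂ + f + (d + 1) * m₂) ^ 2))
    (h22 : Ψ₂₂ = -(d * m₂ * b * (d * m₂ + f + m₂)) /
      ((M₂ * e * f + M₂ * e * m₂ + d * m₂ + f + m₂) ^ 2))
    (hcond1 : d * a * m₂ * (2 * M₂ * e * f + M₂ * e * m₂ + d * m₂ + 2 * f + m₂) /
      ((M₂ * e * f + M₂ * e * m₂ + d * m₂ + f + m₂) ^ 2 * (1 + σ)) < ε + c)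
    (hcond2 : M₂ * b * d * f * (M₂ * e + 1) /
      ((e * (f + m₂) * M₂ + f + (d + 1) * m₂) ^ 2) < c) :
    ∀ z : ℂ, z ^ 2 - ((Ψ₁₁ + Ψ₂₂ : ℝ) : ℂ) * z + ((Ψ₁₁ * Ψ₂₂ - Ψ₁₂ * Ψ₂₁ : ℝ) : ℂ) = 0 →
      z.re < 0 := by
  have hA : Ψ₁₁ < 0 := by rw [h11]; linarith
  have hB : Ψ₂₂ < 0 := by
    rw [h22]
    apply div_neg_of_neg_of_pos
    · exact neg_lt_zero.mpr (by positivity)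
    · positivity
  have hC : Ψ₁₂ < 0 := by
    rw [h12]
    apply div_neg_of_neg_of_pos
    · exact neg_lt_zero.mpr (by positivity)
    · positivity
  have hE : 0 < Ψ₂₁ := by rw [h21]; linarith
  have hT : Ψ₁₁ + Ψ₂₂ < 0 := by linarith
  have hD : 0 < Ψ₁₁ * Ψ₂₂ - Ψ₁₂ * Ψ₂₁ := by nlinarith
  exact quad_neg_re _ _ hT hD
end

section
/- Setting m₂ = (-M cef + M bd - cf)/(c(Me+d+1)) and imposing the monocyte equilibrium condition aL/((1+σ)(1+L)) = ε + c with L = dm₂/((f+m₂)(Me+1)) yields, after clearing denominators, exactly the quadratic AM² + BM + C = 0 with A = bceσ + beεσ + bce + beε, B = acef + bcdσ + bdεσ - abd + bcd + bcσ + bdε + bεσ + bc + bε, C = acf. -/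
/-- Setting m₂ = (-Mcef + Mbd - cf)/(c(Me+d+1)) and imposing the monocyte
equilibrium condition aL/((1+σ)(1+L)) = ε + c with L = dm₂/((f+m₂)(Me+1)) yields the
quadratic AM² + BM + C = 0 with the paper's coefficients. -/
theorem monocyte_condition_gives_quadratic (a b c d e f ε σ M m₂ : ℝ)
    (ha : 0 < a) (hb : 0 < b) (hc : 0 < c) (hd : 0 < d) (he : 0 < e) (hf : 0 < f)
    (hε : 0 < ε) (hσ : 0 < σ) (hM : 0 < M) (hm₂ : 0 < m₂)
    (hm₂def : m₂ = (-(M * c * e * f) + M * b * d - c * f) / (c * (M * e + d + 1)))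
    (L : ℝ) (hL : L = d * m₂ / ((f + m₂) * (M * e + 1)))
    (heq : a * L / ((1 + σ) * (1 + L)) = ε + c) :
    (b * c * e * σ + b * e * ε * σ + b * c * e + b * e * ε) * M ^ 2 +
      (a * c * e * f + b * c * d * σ + b * d * ε * σ - a * b * d + b * c * d +
        b * c * σ + b * d * ε + b * ε * σ + b * c + b * ε) * M +
      a * c * f = 0 := by
  have hC : c * (M * e + d + 1) ≠ 0 := by positivity
  have hD2 : (f + m₂) * (M * e + 1) ≠ 0 := by positivity
  have e1 : m₂ * (c * (M * e + d + 1)) = -(M * c * e * f) + M * b * d - c * f := by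
    rw [hm₂def]; field_simp
  have e2 : L * ((f + m₂) * (M * e + 1)) = d * m₂ := by
    rw [hL]; field_simp
  have hLpos : 0 < L := by
    rw [hL]; positivity
  have hden3 : (1 + σ) * (1 + L) ≠ 0 := by positivity
  have e3 : a * L = (ε + c) * ((1 + σ) * (1 + L)) := by
    field_simp at heq; linarith [heq]
  set X := (ε + c) * (1 + σ) with hX
  have key : a * (d * m₂) = X * ((f + m₂) * (M * e + 1) + d * m₂) := by
    linear_combination ((f + m₂) * (M * e + 1)) * e3 - (a - X) * e2
  have key3 : d * ((b * c * e * σ + b * e * ε * σ + b * c * e + b * e * ε) * M ^ 2 +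
      (a * c * e * f + b * c * d * σ + b * d * ε * σ - a * b * d + b * c * d +
        b * c * σ + b * d * ε + b * ε * σ + b * c + b * ε) * M +
      a * c * f) = 0 := by
    linear_combination -((c * (M * e + d + 1)) * key) + (a * d - X * (M * e + 1) - X * d) * e1
  rcases mul_eq_zero.mp key3 with h | h
  · exact absurd h hd.ne'
  · exact h
end
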